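/- Suppose operators a_t⁻, a_t⁰, a_t⁺, a_z⁻, a_z⁰, a_z⁺ in a (possibly non-commutative) algebra of operators mutually commute across the t/z families, i.e. [a_t^ε, a_z^η] = 0 for all ε, η ∈ {−, 0, +}, with [a_t⁻, a_t⁺] = (cp + dr)a_t⁰ + I, [a_z⁻, a_z⁺] = (js' + kv)a_z⁰ + I, [a_t⁻, a_t⁰] = a_t⁻, [a_z⁻, a_z⁰] = a_z⁻, and real numbers c, d, j, k, p, r, s', v satisfy cs' + dv = 0 and jp + kr = 0. Define a_x⁻ := a_t⁻, a_x⁰ := p a_t⁰ + s' a_z⁰, a_x⁺ := a_t⁺, a_y⁻ := a_z⁻, a_y⁰ := r a_t⁰ + v a_z⁰, a_y⁺ := a_z⁺. Then [a_x⁻, a_x⁺] = c a_x⁰ + d a_y⁰ + I, [a_y⁻, a_y⁺] = j a_x⁰ + k a_y⁰ + I, [a_x⁻, a_x⁰] = p a_x⁻, [a_x⁻, a_y⁰] = r a_x⁻, [a_y⁻, a_x⁰] = s' a_y⁻, and [a_y⁻, a_y⁰] = v a_y⁻. -/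
import Mathlib


/-- The mixed-preservation construction yields closed commutation relations:
with a_x⁻ = a_t⁻, a_x⁰ = p a_t⁰ + s' a_z⁰, a_x⁺ = a_t⁺, a_y⁻ = a_z⁻,
a_y⁰ = r a_t⁰ + v a_z⁰, a_y⁺ = a_z⁺, one has
[a_x⁻, a_x⁺] = c a_x⁰ + d a_y⁰ + I, [a_y⁻, a_y⁺] = j a_x⁰ + k a_y⁰ + I,
[a_x⁻, a_x⁰] = p a_x⁻, [a_x⁻, a_y⁰] = r a_x⁻, [a_y⁻, a_x⁰] = s' a_y⁻,
[a_y⁻, a_y⁰] = v a_y⁻. -/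
theorem stmt_13 (D : Type*) [AddCommGroup D] [Module ℝ D]
    (atm at0 atp azm az0 azp : Module.End ℝ D)
    (c d j k p r s' v : ℝ)
    (hcross : ∀ A B : Module.End ℝ D,
      (A = atm ∨ A = at0 ∨ A = atp) → (B = azm ∨ B = az0 ∨ B = azp) →
      A * B = B * A)
    (h1 : atm * atp - atp * atm = (c * p + d * r) • at0 + 1)
    (h2 : azm * azp - azp * azm = (j * s' + k * v) • az0 + 1)
    (h3 : atm * at0 - at0 * atm = atm)
    (h4 : azm * az0 - az0 * azm = azm)
    (ho1 : c * s' + d * v = 0) (ho2 : j * p + k * r = 0) :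
    atm * atp - atp * atm = c • (p • at0 + s' • az0) + d • (r • at0 + v • az0) + 1 ∧
    azm * azp - azp * azm = j • (p • at0 + s' • az0) + k • (r • at0 + v • az0) + 1 ∧
    atm * (p • at0 + s' • az0) - (p • at0 + s' • az0) * atm = p • atm ∧
    atm * (r • at0 + v • az0) - (r • at0 + v • az0) * atm = r • atm ∧
    azm * (p • at0 + s' • az0) - (p • at0 + s' • az0) * azm = s' • azm ∧
    azm * (r • at0 + v • az0) - (r • at0 + v • az0) * azm = v • azm := by
  have hc1 : atm * az0 = az0 * atm :=
    hcross atm az0 (Or.inl rfl) (Or.inr (Or.inl rfl))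
  have hc2 : at0 * azm = azm * at0 :=
    hcross at0 azm (Or.inr (Or.inl rfl)) (Or.inl rfl)
  have exp : ∀ (a b : ℝ) (X : Module.End ℝ D),
      X * (a • at0 + b • az0) - (a • at0 + b • az0) * X
        = a • (X * at0 - at0 * X) + b • (X * az0 - az0 * X) := by
    intro a b X
    simp only [mul_add, add_mul, mul_smul_comm, smul_mul_assoc, smul_sub]
    abel
  refine ⟨?_, ?_, ?_, ?_, ?_, ?_⟩
  · have e : c • (p • at0 + s' • az0) + d • (r • at0 + v • az0)
        = (c * p + d * r) • at0 + (c * s' + d * v) • az0 := by module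
    rw [h1, e, ho1, zero_smul, add_zero]
  · have e : j • (p • at0 + s' • az0) + k • (r • at0 + v • az0)
        = (j * p + k * r) • at0 + (j * s' + k * v) • az0 := by module
    rw [h2, e, ho2, zero_smul, zero_add]
  · rw [exp, h3, hc1, sub_self, smul_zero, add_zero]
  · rw [exp, h3, hc1, sub_self, smul_zero, add_zero]
  · rw [exp, ← hc2, sub_self, smul_zero, h4, zero_add]
  · rw [exp, ← hc2, sub_self, smul_zero, h4, zero_add]
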